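/- arXiv:2311.02718 — 2 statements merged into one kernel-verified Lean document; each statement's English description precedes it below -/
import Mathlib

section
/- Let a, b, c ∈ ℂ be algebraically independent over ℚ. Define the 4×8 complex matrices L_A with rows (a, b, 0, 0, 1, 0, 0, 0), (b, c, 0, 0, 0, 3, 0, 0), (0, 0, 3a, b, 0, 0, 3, 0), (0, 0, b, c/3, 0, 0, 0, 1) and L_dual with rows (3a, b, 0, 0, 3, 0, 0, 0), (b, c/3, 0, 0, 0, 1, 0, 0), (0, 0, a, b, 0, 0, 1, 0), (0, 0, b, c, 0, 0, 0, 3). If H is a Hermitian 4×4 complex matrix such that every column of H·L_A lies in the column lattice of L_dual, then there exist integers k, h₁₃, h₂₂, h₂₄, h₃₃, m such that H is the matrix with rows (3k, 0, h₁₃, 0), (0, h₂₂, 0, h₂₄), (h₁₃, 0, h₃₃, 0), (0, h₂₄, 0, 3m) (integers cast into ℂ). -/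
open Matrix MvPolynomial

section aux
variable {α : Type*}
@[simp] lemma vec4_0 (a₀ a₁ a₂ a₃ : α) : ![a₀,a₁,a₂,a₃] 0 = a₀ := rfl
@[simp] lemma vec4_1 (a₀ a₁ a₂ a₃ : α) : ![a₀,a₁,a₂,a₃] 1 = a₁ := rfl
@[simp] lemma vec4_2 (a₀ a₁ a₂ a₃ : α) : ![a₀,a₁,a₂,a₃] 2 = a₂ := rfl
@[simp] lemma vec4_3 (a₀ a₁ a₂ a₃ : α) : ![a₀,a₁,a₂,a₃] 3 = a₃ := rfl
@[simp] lemma vec8_0 (a₀ a₁ a₂ a₃ a₄ a₅ a₆ a₇ : α) : ![a₀,a₁,a₂,a₃,a₄,a₅,a₆,a₇] 0 = a₀ := rfl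
@[simp] lemma vec8_1 (a₀ a₁ a₂ a₃ a₄ a₅ a₆ a₇ : α) : ![a₀,a₁,a₂,a₃,a₄,a₅,a₆,a₇] 1 = a₁ := rfl
@[simp] lemma vec8_2 (a₀ a₁ a₂ a₃ a₄ a₅ a₆ a₇ : α) : ![a₀,a₁,a₂,a₃,a₄,a₅,a₆,a₇] 2 = a₂ := rfl
@[simp] lemma vec8_3 (a₀ a₁ a₂ a₃ a₄ a₅ a₆ a₇ : α) : ![a₀,a₁,a₂,a₃,a₄,a₅,a₆,a₇] 3 = a₃ := rfl
@[simp] lemma vec8_4 (a₀ a₁ a₂ a₃ a₄ a₅ a₆ a₇ : α) : ![a₀,a₁,a₂,a₃,a₄,a₅,a₆,a₇] 4 = a₄ := rfl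
@[simp] lemma vec8_5 (a₀ a₁ a₂ a₃ a₄ a₅ a₆ a₇ : α) : ![a₀,a₁,a₂,a₃,a₄,a₅,a₆,a₇] 5 = a₅ := rfl
@[simp] lemma vec8_6 (a₀ a₁ a₂ a₃ a₄ a₅ a₆ a₇ : α) : ![a₀,a₁,a₂,a₃,a₄,a₅,a₆,a₇] 6 = a₆ := rfl
@[simp] lemma vec8_7 (a₀ a₁ a₂ a₃ a₄ a₅ a₆ a₇ : α) : ![a₀,a₁,a₂,a₃,a₄,a₅,a₆,a₇] 7 = a₇ := rfl
end aux

lemma qlin {a b c : ℂ} (hind : AlgebraicIndependent ℚ ![a, b, c])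
    (q₀ q₁ q₂ q₃ q₄ q₅ q₆ q₇ q₈ q₉ : ℚ)
    (h : (q₀:ℂ) + q₁*a + q₂*b + q₃*c + q₄*(a*a) + q₅*(a*b) + q₆*(a*c) + q₇*(b*b)
        + q₈*(b*c) + q₉*(c*c) = 0) :
    q₀ = 0 ∧ q₁ = 0 ∧ q₂ = 0 ∧ q₃ = 0 ∧ q₄ = 0 ∧ q₅ = 0 ∧ q₆ = 0 ∧ q₇ = 0
      ∧ q₈ = 0 ∧ q₉ = 0 := by
  have hp0 : (C q₀ + C q₁ * X 0 + C q₂ * X 1 + C q₃ * X 2 + C q₄ * X 0 * X 0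
      + C q₅ * X 0 * X 1 + C q₆ * X 0 * X 2 + C q₇ * X 1 * X 1
      + C q₈ * X 1 * X 2 + C q₉ * X 2 * X 2 : MvPolynomial (Fin 3) ℚ) = 0 := hind (by
    show _ = (aeval ![a,b,c] : MvPolynomial (Fin 3) ℚ →ₐ[ℚ] ℂ) 0
    simp only [map_add, _root_.map_mul, map_pow, aeval_C, aeval_X, map_zero,
      Matrix.cons_val_zero, Matrix.cons_val_one, Matrix.head_cons,
      Matrix.cons_val_two, Matrix.tail_cons, eq_ratCast]
    linear_combination h)
  refine ⟨?_, ?_, ?_, ?_, ?_, ?_, ?_, ?_, ?_, ?_⟩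
  · have := congrArg (coeff (0 : Fin 3 →₀ ℕ)) hp0
    simpa [coeff_add, coeff_mul_X', coeff_C, Finsupp.mem_support_iff, Finsupp.single_apply,
      Finsupp.add_apply, Finsupp.sub_apply, Finsupp.ext_iff, Fin.forall_fin_succ] using this
  · have := congrArg (coeff (Finsupp.single (0:Fin 3) 1)) hp0
    simpa [coeff_add, coeff_mul_X', coeff_C, Finsupp.mem_support_iff, Finsupp.single_apply,
      Finsupp.add_apply, Finsupp.sub_apply, Finsupp.ext_iff, Fin.forall_fin_succ] using this
  · have := congrArg (coeff (Finsupp.single (1:Fin 3) 1)) hp0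
    simpa [coeff_add, coeff_mul_X', coeff_C, Finsupp.mem_support_iff, Finsupp.single_apply,
      Finsupp.add_apply, Finsupp.sub_apply, Finsupp.ext_iff, Fin.forall_fin_succ] using this
  · have := congrArg (coeff (Finsupp.single (2:Fin 3) 1)) hp0
    simpa [coeff_add, coeff_mul_X', coeff_C, Finsupp.mem_support_iff, Finsupp.single_apply,
      Finsupp.add_apply, Finsupp.sub_apply, Finsupp.ext_iff, Fin.forall_fin_succ] using this
  · have := congrArg (coeff (Finsupp.single (0:Fin 3) 2)) hp0
    simpa [coeff_add, coeff_mul_X', coeff_C, Finsupp.mem_support_iff, Finsupp.single_apply,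
      Finsupp.add_apply, Finsupp.sub_apply, Finsupp.ext_iff, Fin.forall_fin_succ] using this
  · have := congrArg (coeff (Finsupp.single (0:Fin 3) 1 + Finsupp.single 1 1)) hp0
    simpa [coeff_add, coeff_mul_X', coeff_C, Finsupp.mem_support_iff, Finsupp.single_apply,
      Finsupp.add_apply, Finsupp.sub_apply, Finsupp.ext_iff, Fin.forall_fin_succ] using this
  · have := congrArg (coeff (Finsupp.single (0:Fin 3) 1 + Finsupp.single 2 1)) hp0
    simpa [coeff_add, coeff_mul_X', coeff_C, Finsupp.mem_support_iff, Finsupp.single_apply,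
      Finsupp.add_apply, Finsupp.sub_apply, Finsupp.ext_iff, Fin.forall_fin_succ] using this
  · have := congrArg (coeff (Finsupp.single (1:Fin 3) 2)) hp0
    simpa [coeff_add, coeff_mul_X', coeff_C, Finsupp.mem_support_iff, Finsupp.single_apply,
      Finsupp.add_apply, Finsupp.sub_apply, Finsupp.ext_iff, Fin.forall_fin_succ] using this
  · have := congrArg (coeff (Finsupp.single (1:Fin 3) 1 + Finsupp.single 2 1)) hp0
    simpa [coeff_add, coeff_mul_X', coeff_C, Finsupp.mem_support_iff, Finsupp.single_apply,
      Finsupp.add_apply, Finsupp.sub_apply, Finsupp.ext_iff, Fin.forall_fin_succ] using this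
  · have := congrArg (coeff (Finsupp.single (2:Fin 3) 2)) hp0
    simpa [coeff_add, coeff_mul_X', coeff_C, Finsupp.mem_support_iff, Finsupp.single_apply,
      Finsupp.add_apply, Finsupp.sub_apply, Finsupp.ext_iff, Fin.forall_fin_succ] using this



/-- The column lattice of a 4×8 complex matrix: the ℤ-submodule of ℂ⁴ spanned by
the set of its 8 columns. -/
noncomputable def colLattice (M : Matrix (Fin 4) (Fin 8) ℂ) : Submodule ℤ (Fin 4 → ℂ) :=
  Submodule.span ℤ (Set.range Mᵀ)

/-- The period matrix of `A = S × Ŝ`. -/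
noncomputable def LA (a b c : ℂ) : Matrix (Fin 4) (Fin 8) ℂ :=
  !![a, b, 0, 0, 1, 0, 0, 0;
     b, c, 0, 0, 0, 3, 0, 0;
     0, 0, 3*a, b, 0, 0, 3, 0;
     0, 0, b, c/3, 0, 0, 0, 1]

/-- The period matrix of the dual `Â = Ŝ × S`. -/
noncomputable def Ldual (a b c : ℂ) : Matrix (Fin 4) (Fin 8) ℂ :=
  !![3*a, b, 0, 0, 3, 0, 0, 0;
     b, c/3, 0, 0, 0, 1, 0, 0;
     0, 0, a, b, 0, 0, 1, 0;
     0, 0, b, c, 0, 0, 0, 3]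

set_option maxHeartbeats 2000000 in
/-- First step of the proof of Lemma 5.4: if `H` is Hermitian and every column of
`H * L_A` lies in the column lattice of `L_dual`, then `H` has integer entries in
the indicated block form. -/
theorem hermitian_integral_block_form (a b c : ℂ)
    (hind : AlgebraicIndependent ℚ ![a, b, c])
    (H : Matrix (Fin 4) (Fin 4) ℂ) (hH : H.IsHermitian)
    (hcols : ∀ j : Fin 8, (H * LA a b c)ᵀ j ∈ colLattice (Ldual a b c)) :
    ∃ k h₁₃ h₂₂ h₂₄ h₃₃ m : ℤ,
      H = !![((3 * k : ℤ) : ℂ), 0, (h₁₃ : ℂ), 0;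
             0, (h₂₂ : ℂ), 0, (h₂₄ : ℂ);
             (h₁₃ : ℂ), 0, (h₃₃ : ℂ), 0;
             0, (h₂₄ : ℂ), 0, ((3 * m : ℤ) : ℂ)] := by
  have key : ∀ j : Fin 8, ∃ n : Fin 8 → ℤ, ∀ k : Fin 4,
      (H * LA a b c) k j = ∑ i, (n i : ℂ) * Ldual a b c k i := by
    intro j
    have h := hcols j
    rw [colLattice] at h
    obtain ⟨n, hn⟩ := (Submodule.mem_span_range_iff_exists_fun (R := ℤ)).mp h
    exact ⟨n, fun k => by
      have := congrFun hn k
      simpa [Finset.sum_apply, zsmul_eq_mul] using this.symm⟩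
  obtain ⟨n0, e0⟩ := key 0
  obtain ⟨n2, e2⟩ := key 2
  obtain ⟨n4, e4⟩ := key 4
  obtain ⟨n5, e5⟩ := key 5
  obtain ⟨n6, e6⟩ := key 6
  obtain ⟨n7, e7⟩ := key 7
  have E00 := e0 0; have E01 := e0 1; have E02 := e0 2; have E03 := e0 3
  have E20 := e2 0; have E21 := e2 1; have E22 := e2 2; have E23 := e2 3
  have E40 := e4 0; have E41 := e4 1; have E42 := e4 2; have E43 := e4 3
  have E50 := e5 0; have E51 := e5 1; have E52 := e5 2; have E53 := e5 3
  have E60 := e6 0; have E61 := e6 1; have E62 := e6 2; have E63 := e6 3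
  have E70 := e7 0; have E71 := e7 1; have E72 := e7 2; have E73 := e7 3
  simp only [LA, Ldual, Matrix.mul_apply, Fin.sum_univ_eight, Fin.sum_univ_four, Matrix.of_apply,
    vec4_0, vec4_1, vec4_2, vec4_3, vec8_0, vec8_1, vec8_2, vec8_3, vec8_4, vec8_5, vec8_6, vec8_7,
    mul_zero, zero_mul, mul_one, one_mul, add_zero, zero_add]
    at E00 E01 E02 E03 E20 E21 E22 E23 E40 E41 E42 E43 E50 E51 E52 E53 E60 E61 E62 E63 E70 E71 E72 E73
  -- coefficient extraction
  obtain ⟨A00, A01, A02, -, A04, A05, -, A07, -, -⟩ :=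
    qlin hind (-9*(n0 4)) (9*(n4 4) - 9*(n0 0)) (3*(n5 4) - 3*(n0 1)) 0 (9*(n4 0))
      (3*(n4 1) + 3*(n5 0)) 0 (n5 1) 0 0
      (by push_cast; linear_combination (3:ℂ)*E00 - (3*a)*E40 - b*E50)
  obtain ⟨B00, B01, B02, B03, -, B05, B06, B07, B08, -⟩ :=
    qlin hind (-9*(n0 5)) (9*(n4 5)) (3*(n5 5) - 9*(n0 0)) (-3*(n0 1)) 0 (9*(n4 0))
      (3*(n4 1)) (3*(n5 0)) (n5 1) 0
      (by push_cast; linear_combination (9:ℂ)*E01 - (9*a)*E41 - (3*b)*E51)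
  obtain ⟨C00, C01, C02, -, C04, C05, -, C07, -, -⟩ :=
    qlin hind (-3*(n0 6)) (3*(n4 6) - 3*(n0 2)) ((n5 6) - 3*(n0 3)) 0 (3*(n4 2))
      (3*(n4 3) + (n5 2)) 0 (n5 3) 0 0
      (by push_cast; linear_combination (3:ℂ)*E02 - (3*a)*E42 - b*E52)
  obtain ⟨D00, D01, D02, D03, -, D05, D06, D07, D08, -⟩ :=
    qlin hind (-9*(n0 7)) (9*(n4 7)) (3*(n5 7) - 3*(n0 2)) (-3*(n0 3)) 0 (3*(n4 2))
      (3*(n4 3)) (n5 2) (n5 3) 0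
      (by push_cast; linear_combination (3:ℂ)*E03 - (3*a)*E43 - b*E53)
  obtain ⟨P00, P01, P02, -, P04, P05, -, P07, -, -⟩ :=
    qlin hind (-9*(n2 4)) (9*(n6 4) - 9*(n2 0)) (9*(n7 4) - 3*(n2 1)) 0 (9*(n6 0))
      (3*(n6 1) + 9*(n7 0)) 0 (3*(n7 1)) 0 0
      (by push_cast; linear_combination (3:ℂ)*E20 - (3*a)*E60 - (3*b)*E70)
  obtain ⟨Q00, Q01, Q02, Q03, -, Q05, Q06, Q07, Q08, -⟩ :=
    qlin hind (-3*(n2 5)) (3*(n6 5)) (3*(n7 5) - 3*(n2 0)) (-(n2 1)) 0 (3*(n6 0))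
      (n6 1) (3*(n7 0)) (n7 1) 0
      (by push_cast; linear_combination (3:ℂ)*E21 - (3*a)*E61 - (3*b)*E71)
  obtain ⟨R00, R01, R02, -, R04, R05, -, R07, -, -⟩ :=
    qlin hind (-3*(n2 6)) (3*(n6 6) - 3*(n2 2)) (3*(n7 6) - 3*(n2 3)) 0 (3*(n6 2))
      (3*(n6 3) + 3*(n7 2)) 0 (3*(n7 3)) 0 0
      (by push_cast; linear_combination (3:ℂ)*E22 - (3*a)*E62 - (3*b)*E72)
  obtain ⟨S00, S01, S02, S03, -, S05, S06, S07, S08, -⟩ :=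
    qlin hind (-9*(n2 7)) (9*(n6 7)) (9*(n7 7) - 3*(n2 2)) (-3*(n2 3)) 0 (3*(n6 2))
      (3*(n6 3)) (3*(n7 2)) (3*(n7 3)) 0
      (by push_cast; linear_combination (3:ℂ)*E23 - (3*a)*E63 - (3*b)*E73)
  -- complex versions of the integer facts
  have Z40 : ((n4 0 : ℤ) : ℂ) = 0 := by exact_mod_cast (by linarith [A04] : (n4 0 : ℚ) = 0)
  have Z41 : ((n4 1 : ℤ) : ℂ) = 0 := by exact_mod_cast (by linarith [B06] : (n4 1 : ℚ) = 0)
  have Z42 : ((n4 2 : ℤ) : ℂ) = 0 := by exact_mod_cast (by linarith [C04] : (n4 2 : ℚ) = 0)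
  have Z43 : ((n4 3 : ℤ) : ℂ) = 0 := by exact_mod_cast (by linarith [D06] : (n4 3 : ℚ) = 0)
  have Z45 : ((n4 5 : ℤ) : ℂ) = 0 := by exact_mod_cast (by linarith [B01] : (n4 5 : ℚ) = 0)
  have Z47 : ((n4 7 : ℤ) : ℂ) = 0 := by exact_mod_cast (by linarith [D01] : (n4 7 : ℚ) = 0)
  have Z50 : ((n5 0 : ℤ) : ℂ) = 0 := by exact_mod_cast (by linarith [B07] : (n5 0 : ℚ) = 0)
  have Z51 : ((n5 1 : ℤ) : ℂ) = 0 := by exact_mod_cast (by linarith [A07] : (n5 1 : ℚ) = 0)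
  have Z52 : ((n5 2 : ℤ) : ℂ) = 0 := by exact_mod_cast (by linarith [D07] : (n5 2 : ℚ) = 0)
  have Z53 : ((n5 3 : ℤ) : ℂ) = 0 := by exact_mod_cast (by linarith [C07] : (n5 3 : ℚ) = 0)
  have Z55 : ((n5 5 : ℤ) : ℂ) = 3*((n0 0 : ℤ) : ℂ) := by
    exact_mod_cast (by linarith [B02] : (n5 5 : ℚ) = 3*(n0 0 : ℚ))
  have Z56 : ((n5 6 : ℤ) : ℂ) = 0 := by exact_mod_cast (by linarith [C02, D03] : (n5 6 : ℚ) = 0)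
  have Z60 : ((n6 0 : ℤ) : ℂ) = 0 := by exact_mod_cast (by linarith [P04] : (n6 0 : ℚ) = 0)
  have Z61 : ((n6 1 : ℤ) : ℂ) = 0 := by exact_mod_cast (by linarith [Q06] : (n6 1 : ℚ) = 0)
  have Z62 : ((n6 2 : ℤ) : ℂ) = 0 := by exact_mod_cast (by linarith [R04] : (n6 2 : ℚ) = 0)
  have Z63 : ((n6 3 : ℤ) : ℂ) = 0 := by exact_mod_cast (by linarith [S06] : (n6 3 : ℚ) = 0)
  have Z65 : ((n6 5 : ℤ) : ℂ) = 0 := by exact_mod_cast (by linarith [Q01] : (n6 5 : ℚ) = 0)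
  have Z66 : ((n6 6 : ℤ) : ℂ) = 3*((n7 7 : ℤ) : ℂ) := by
    exact_mod_cast (by linarith [R01, S02] : (n6 6 : ℚ) = 3*(n7 7 : ℚ))
  have Z67 : ((n6 7 : ℤ) : ℂ) = 0 := by exact_mod_cast (by linarith [S01] : (n6 7 : ℚ) = 0)
  have Z70 : ((n7 0 : ℤ) : ℂ) = 0 := by exact_mod_cast (by linarith [Q07] : (n7 0 : ℚ) = 0)
  have Z71 : ((n7 1 : ℤ) : ℂ) = 0 := by exact_mod_cast (by linarith [P07] : (n7 1 : ℚ) = 0)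
  have Z72 : ((n7 2 : ℤ) : ℂ) = 0 := by exact_mod_cast (by linarith [S07] : (n7 2 : ℚ) = 0)
  have Z73 : ((n7 3 : ℤ) : ℂ) = 0 := by exact_mod_cast (by linarith [R07] : (n7 3 : ℚ) = 0)
  have Z74 : ((n7 4 : ℤ) : ℂ) = 0 := by exact_mod_cast (by linarith [P02, Q03] : (n7 4 : ℚ) = 0)
  have Z76 : ((n7 6 : ℤ) : ℂ) = 0 := by exact_mod_cast (by linarith [R02, S03] : (n7 6 : ℚ) = 0)
  -- entry values
  have herm : ∀ i j, (starRingEnd ℂ) (H j i) = H i j := fun i j => by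
    have := congrFun (congrFun hH i) j
    simpa [Matrix.conjTranspose_apply] using this
  have h00 : H 0 0 = 3*((n4 4 : ℤ) : ℂ) := by linear_combination E40 + (3*a)*Z40 + b*Z41
  have h10 : H 1 0 = 0 := by linear_combination E41 + b*Z40 + (c/3)*Z41 + Z45
  have h20 : H 2 0 = ((n4 6 : ℤ) : ℂ) := by linear_combination E42 + a*Z42 + b*Z43
  have h30 : H 3 0 = 0 := by linear_combination E43 + b*Z42 + c*Z43 + 3*Z47
  have h11 : H 1 1 = ((n0 0 : ℤ) : ℂ) := by
    linear_combination (1/3 : ℂ)*E51 + (b/3)*Z50 + (c/9)*Z51 + (1/3 : ℂ)*Z55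
  have h21 : H 2 1 = 0 := by
    linear_combination (1/3 : ℂ)*E52 + (a/3)*Z52 + (b/3)*Z53 + (1/3 : ℂ)*Z56
  have h12 : H 1 2 = 0 := by
    linear_combination (1/3 : ℂ)*E61 + (b/3)*Z60 + (c/9)*Z61 + (1/3 : ℂ)*Z65
  have h22 : H 2 2 = ((n7 7 : ℤ) : ℂ) := by
    linear_combination (1/3 : ℂ)*E62 + (a/3)*Z62 + (b/3)*Z63 + (1/3 : ℂ)*Z66
  have h32 : H 3 2 = 0 := by
    linear_combination (1/3 : ℂ)*E63 + (b/3)*Z62 + (c/3)*Z63 + Z67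
  have h03 : H 0 3 = 0 := by linear_combination E70 + (3*a)*Z70 + b*Z71 + 3*Z74
  have h13 : H 1 3 = ((n7 5 : ℤ) : ℂ) := by linear_combination E71 + b*Z70 + (c/3)*Z71
  have h23 : H 2 3 = 0 := by linear_combination E72 + a*Z72 + b*Z73 + Z76
  have h33 : H 3 3 = 3*((n7 7 : ℤ) : ℂ) := by linear_combination E73 + b*Z72 + c*Z73
  have h01 : H 0 1 = 0 := by rw [← herm 0 1, h10, map_zero]
  have h02 : H 0 2 = ((n4 6 : ℤ) : ℂ) := by
    rw [← herm 0 2, h20]; exact map_intCast _ _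
  have h31 : H 3 1 = ((n7 5 : ℤ) : ℂ) := by
    rw [← herm 3 1, h13]; exact map_intCast _ _
  refine ⟨n4 4, n4 6, n0 0, n7 5, n7 7, n7 7, ?_⟩
  ext i j
  fin_cases i <;> fin_cases j <;>
    simp only [Matrix.of_apply, Matrix.cons_val_zero, Matrix.cons_val_one, Matrix.head_cons,
      vec4_0, vec4_1, vec4_2, vec4_3, Fin.mk_zero, Fin.mk_one] <;>
    push_cast <;>
    first
      | exact h00 | exact h01 | exact h02 | exact h03
      | exact h10 | exact h11 | exact h12 | exact h13
      | exact h20 | exact h21 | exact h22 | exact h23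
      | exact h30 | exact h31 | exact h32 | exact h33
end

section
/- Let a, b, c ∈ ℂ be algebraically independent over ℚ. Define the 4×8 complex matrices L_A with rows (a, b, 0, 0, 1, 0, 0, 0), (b, c, 0, 0, 0, 3, 0, 0), (0, 0, 3a, b, 0, 0, 3, 0), (0, 0, b, c/3, 0, 0, 0, 1) and L_dual with rows (3a, b, 0, 0, 3, 0, 0, 0), (b, c/3, 0, 0, 0, 1, 0, 0), (0, 0, a, b, 0, 0, 1, 0), (0, 0, b, c, 0, 0, 0, 3). If H is a Hermitian 4×4 complex matrix such that the column lattice of H·L_A equals the column lattice of L_dual, then there exist integers k, h, m such that H is the matrix with rows (3k, 0, h, 0), (0, k, 0, h), (h, 0, m, 0), (0, h, 0, 3m) (integers cast into ℂ). -/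
open Matrix

open MvPolynomial in
theorem lin9 (a b c : ℂ) (hind : AlgebraicIndependent ℚ ![a, b, c])
    (t0 t1 t2 t3 t4 t5 t6 t7 t8 : ℤ)
    (h : (t0:ℂ) + t1*a + t2*b + t3*c + t4*a^2 + t5*(a*b) + t6*b^2 + t7*(a*c) + t8*(b*c) = 0) :
    t0 = 0 ∧ t1 = 0 ∧ t2 = 0 ∧ t3 = 0 ∧ t4 = 0 ∧ t5 = 0 ∧ t6 = 0 ∧ t7 = 0 ∧ t8 = 0 := by
  have hinj := algebraicIndependent_iff_injective_aeval.mp hind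
  set p : MvPolynomial (Fin 3) ℚ :=
    C (t0:ℚ) + C (t1:ℚ) * X 0 + C (t2:ℚ) * X 1 + C (t3:ℚ) * X 2 + C (t4:ℚ) * X 0^2
      + C (t5:ℚ) * (X 0 * X 1) + C (t6:ℚ) * X 1^2 + C (t7:ℚ) * (X 0 * X 2)
      + C (t8:ℚ) * (X 1 * X 2) with hp
  have hev : aeval ![a,b,c] p = 0 := by
    simp [hp, map_add, _root_.map_mul, aeval_X, aeval_C]
    linear_combination h
  have hp0 : p = 0 := hinj (a₁ := p) (a₂ := 0) (by simpa using hev)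
  have he : ∀ x y z : ℚ, (t0:ℚ) + t1*x + t2*y + t3*z + t4*x^2 + t5*(x*y) + t6*y^2
      + t7*(x*z) + t8*(y*z) = 0 := by
    intro x y z
    have := congrArg (eval ![x,y,z]) hp0
    simpa [hp, eval_C, eval_X] using this
  have h000 := he 0 0 0
  have h100 := he 1 0 0
  have h200 := he 2 0 0
  have h010 := he 0 1 0
  have h020 := he 0 2 0
  have h001 := he 0 0 1
  have h110 := he 1 1 0
  have h101 := he 1 0 1
  have h011 := he 0 1 1
  norm_num at h000 h100 h200 h010 h020 h001 h110 h101 h011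
  have q0 : (t0:ℚ) = 0 := by exact_mod_cast h000
  have q1 : (t1:ℚ) = 0 := by linarith
  have q4 : (t4:ℚ) = 0 := by linarith
  have q2 : (t2:ℚ) = 0 := by linarith
  have q6 : (t6:ℚ) = 0 := by linarith
  have q3 : (t3:ℚ) = 0 := by linarith
  have q5 : (t5:ℚ) = 0 := by linarith
  have q7 : (t7:ℚ) = 0 := by linarith
  have q8 : (t8:ℚ) = 0 := by linarith
  exact ⟨by exact_mod_cast q0, by exact_mod_cast q1, by exact_mod_cast q2,
    by exact_mod_cast q3, by exact_mod_cast q4, by exact_mod_cast q5,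
    by exact_mod_cast q6, by exact_mod_cast q7, by exact_mod_cast q8⟩

/-- Reduction step in the proof of Lemma 5.4: a Hermitian `H` with
`colLattice (H * L_A) = colLattice L_dual` belongs to a three-parameter
integral family. -/
theorem hermitian_three_parameter_form (a b c : ℂ)
    (hind : AlgebraicIndependent ℚ ![a, b, c])
    (H : Matrix (Fin 4) (Fin 4) ℂ) (hH : H.IsHermitian)
    (hlat : colLattice (H * LA a b c) = colLattice (Ldual a b c)) :
    ∃ k h m : ℤ,
      H = !![((3 * k : ℤ) : ℂ), 0, (h : ℂ), 0;
             0, (k : ℂ), 0, (h : ℂ);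
             (h : ℂ), 0, (m : ℂ), 0;
             0, (h : ℂ), 0, ((3 * m : ℤ) : ℂ)] := by
  have colmem : ∀ j : Fin 8, ∃ n : Fin 8 → ℤ,
      ((H * LA a b c) 0 j = 3*a*(n 0 : ℂ) + b*(n 1) + 3*(n 4)) ∧
      ((H * LA a b c) 1 j = b*(n 0 : ℂ) + c/3*(n 1) + (n 5)) ∧
      ((H * LA a b c) 2 j = a*(n 2 : ℂ) + b*(n 3) + (n 6)) ∧
      ((H * LA a b c) 3 j = b*(n 2 : ℂ) + c*(n 3) + 3*(n 7)) := by
    intro j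
    have hmem : (H * LA a b c)ᵀ j ∈ colLattice (Ldual a b c) := by
      rw [← hlat]
      exact Submodule.subset_span (Set.mem_range_self j)
    rw [colLattice] at hmem
    obtain ⟨n, hn⟩ := (Submodule.mem_span_range_iff_exists_fun (v := fun i => (Ldual a b c)ᵀ i) ℤ).mp hmem
    refine ⟨n, ?_, ?_, ?_, ?_⟩
    · have e := congr_fun hn 0
      simp only [Fin.sum_univ_eight, Pi.add_apply, Pi.smul_apply, Matrix.transpose_apply,
        zsmul_eq_mul, Pi.mul_apply, Pi.intCast_apply,
      show Ldual a b c 0 0 = 3*a from rfl,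
      show Ldual a b c 0 1 = b from rfl,
      show Ldual a b c 0 2 = 0 from rfl,
      show Ldual a b c 0 3 = 0 from rfl,
      show Ldual a b c 0 4 = 3 from rfl,
      show Ldual a b c 0 5 = 0 from rfl,
      show Ldual a b c 0 6 = 0 from rfl,
      show Ldual a b c 0 7 = 0 from rfl,
        mul_zero, add_zero, mul_one] at e
      linear_combination -e
    · have e := congr_fun hn 1
      simp only [Fin.sum_univ_eight, Pi.add_apply, Pi.smul_apply, Matrix.transpose_apply,
        zsmul_eq_mul, Pi.mul_apply, Pi.intCast_apply,
      show Ldual a b c 1 0 = b from rfl,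
      show Ldual a b c 1 1 = c/3 from rfl,
      show Ldual a b c 1 2 = 0 from rfl,
      show Ldual a b c 1 3 = 0 from rfl,
      show Ldual a b c 1 4 = 0 from rfl,
      show Ldual a b c 1 5 = 1 from rfl,
      show Ldual a b c 1 6 = 0 from rfl,
      show Ldual a b c 1 7 = 0 from rfl,
        mul_zero, add_zero, mul_one] at e
      linear_combination -e
    · have e := congr_fun hn 2
      simp only [Fin.sum_univ_eight, Pi.add_apply, Pi.smul_apply, Matrix.transpose_apply,
        zsmul_eq_mul, Pi.mul_apply, Pi.intCast_apply,
      show Ldual a b c 2 0 = 0 from rfl,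
      show Ldual a b c 2 1 = 0 from rfl,
      show Ldual a b c 2 2 = a from rfl,
      show Ldual a b c 2 3 = b from rfl,
      show Ldual a b c 2 4 = 0 from rfl,
      show Ldual a b c 2 5 = 0 from rfl,
      show Ldual a b c 2 6 = 1 from rfl,
      show Ldual a b c 2 7 = 0 from rfl,
        mul_zero, add_zero, mul_one] at e
      linear_combination -e
    · have e := congr_fun hn 3
      simp only [Fin.sum_univ_eight, Pi.add_apply, Pi.smul_apply, Matrix.transpose_apply,
        zsmul_eq_mul, Pi.mul_apply, Pi.intCast_apply,
      show Ldual a b c 3 0 = 0 from rfl,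
      show Ldual a b c 3 1 = 0 from rfl,
      show Ldual a b c 3 2 = b from rfl,
      show Ldual a b c 3 3 = c from rfl,
      show Ldual a b c 3 4 = 0 from rfl,
      show Ldual a b c 3 5 = 0 from rfl,
      show Ldual a b c 3 6 = 0 from rfl,
      show Ldual a b c 3 7 = 3 from rfl,
        mul_zero, add_zero, mul_one] at e
      linear_combination -e
  have mul4 : ∀ (r : Fin 4) (j : Fin 8), (H * LA a b c) r j =
      H r 0 * LA a b c 0 j + H r 1 * LA a b c 1 j + H r 2 * LA a b c 2 j
        + H r 3 * LA a b c 3 j := by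
    intro r j
    rw [Matrix.mul_apply, Fin.sum_univ_four]
  obtain ⟨A, hA0, hA1, hA2, hA3⟩ := colmem 4
  obtain ⟨B, hB0, hB1, hB2, hB3⟩ := colmem 5
  obtain ⟨C, hC0, hC1, hC2, hC3⟩ := colmem 6
  obtain ⟨D, hD0, hD1, hD2, hD3⟩ := colmem 7
  obtain ⟨E, hE0, hE1, hE2, hE3⟩ := colmem 0
  obtain ⟨F, hF0, hF1, hF2, hF3⟩ := colmem 2
  simp only [mul4, show LA a b c 0 4 = 1 from rfl, show LA a b c 1 4 = 0 from rfl, show LA a b c 2 4 = 0 from rfl, show LA a b c 3 4 = 0 from rfl,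
    mul_zero, add_zero, mul_one, zero_add] at hA0 hA1 hA2 hA3
  simp only [mul4, show LA a b c 0 5 = 0 from rfl, show LA a b c 1 5 = 3 from rfl, show LA a b c 2 5 = 0 from rfl, show LA a b c 3 5 = 0 from rfl,
    mul_zero, add_zero, mul_one, zero_add] at hB0 hB1 hB2 hB3
  simp only [mul4, show LA a b c 0 6 = 0 from rfl, show LA a b c 1 6 = 0 from rfl, show LA a b c 2 6 = 3 from rfl, show LA a b c 3 6 = 0 from rfl,
    mul_zero, add_zero, mul_one, zero_add] at hC0 hC1 hC2 hC3
  simp only [mul4, show LA a b c 0 7 = 0 from rfl, show LA a b c 1 7 = 0 from rfl, show LA a b c 2 7 = 0 from rfl, show LA a b c 3 7 = 1 from rfl,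
    mul_zero, add_zero, mul_one, zero_add] at hD0 hD1 hD2 hD3
  simp only [mul4, show LA a b c 0 0 = a from rfl, show LA a b c 1 0 = b from rfl, show LA a b c 2 0 = 0 from rfl, show LA a b c 3 0 = 0 from rfl,
    mul_zero, add_zero, mul_one, zero_add] at hE0 hE1 hE2 hE3
  simp only [mul4, show LA a b c 0 2 = 0 from rfl, show LA a b c 1 2 = 0 from rfl, show LA a b c 2 2 = 3*a from rfl, show LA a b c 3 2 = b from rfl,
    mul_zero, add_zero, mul_one, zero_add] at hF0 hF1 hF2 hF3
  -- E, r = 0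
  obtain ⟨e4, ae0, be1, -, a0, ab1, b1, -, -⟩ :=
    lin9 a b c hind (9*E 4) (9*(E 0) - 9*(A 4)) (3*(E 1) - 3*(B 4)) 0
      (-(9*(A 0))) (-(3*(A 1)) - 3*(B 0)) (-(B 1)) 0 0
      (by push_cast; linear_combination 3*a*hA0 + b*hB0 - 3*hE0)
  -- E, r = 1
  obtain ⟨e5, a5, b5e, e1, -, a0', b0, a1, b1'⟩ :=
    lin9 a b c hind (9*E 5) (-(9*(A 5))) (9*(E 0) - 3*(B 5)) (3*(E 1)) 0
      (-(9*(A 0))) (-(3*(B 0))) (-(3*(A 1))) (-(B 1))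
      (by push_cast; linear_combination 9*a*hA1 + 3*b*hB1 - 9*hE1)
  -- E, r = 2
  obtain ⟨e6, a6e2, b6e3, -, a2, ab2, b3, -, -⟩ :=
    lin9 a b c hind (3*E 6) (3*(E 2) - 3*(A 6)) (3*(E 3) - (B 6)) 0
      (-(3*(A 2))) (-(3*(A 3)) - (B 2)) (-(B 3)) 0 0
      (by push_cast; linear_combination 3*a*hA2 + b*hB2 - 3*hE2)
  -- E, r = 3
  obtain ⟨e7, a7, b7e2, e3, -, a2', b2, a3, b3'⟩ :=
    lin9 a b c hind (9*E 7) (-(9*(A 7))) (3*(E 2) - 3*(B 7)) (3*(E 3)) 0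
      (-(3*(A 2))) (-(B 2)) (-(3*(A 3))) (-(B 3))
      (by push_cast; linear_combination 3*a*hA3 + b*hB3 - 3*hE3)
  -- F, r = 0
  obtain ⟨f4, cf0, df1, -, c0, cd1, d1, -, -⟩ :=
    lin9 a b c hind (9*F 4) (9*(F 0) - 9*(C 4)) (3*(F 1) - 9*(D 4)) 0
      (-(9*(C 0))) (-(3*(C 1)) - 9*(D 0)) (-(3*(D 1))) 0 0
      (by push_cast; linear_combination 3*a*hC0 + 3*b*hD0 - 3*hF0)
  -- F, r = 1
  obtain ⟨f5, c5, d5f, f1, -, c0', d0, c1, d1'⟩ :=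
    lin9 a b c hind (9*F 5) (-(9*(C 5))) (9*(F 0) - 9*(D 5)) (3*(F 1)) 0
      (-(9*(C 0))) (-(9*(D 0))) (-(3*(C 1))) (-(3*(D 1)))
      (by push_cast; linear_combination 9*a*hC1 + 9*b*hD1 - 9*hF1)
  -- F, r = 2
  obtain ⟨f6, c6f2, d6f3, -, c2, cd3, d3, -, -⟩ :=
    lin9 a b c hind (3*F 6) (3*(F 2) - 3*(C 6)) (3*(F 3) - 3*(D 6)) 0
      (-(3*(C 2))) (-(3*(C 3)) - 3*(D 2)) (-(3*(D 3))) 0 0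
      (by push_cast; linear_combination 3*a*hC2 + 3*b*hD2 - 3*hF2)
  -- F, r = 3
  obtain ⟨f7, c7, d7f2, f3, -, c2', d2, c3, d3'⟩ :=
    lin9 a b c hind (9*F 7) (-(9*(C 7))) (3*(F 2) - 9*(D 7)) (3*(F 3)) 0
      (-(3*(C 2))) (-(3*(D 2))) (-(3*(C 3))) (-(3*(D 3)))
      (by push_cast; linear_combination 3*a*hC3 + 3*b*hD3 - 3*hF3)
  have zA0 : A 0 = 0 := by omega
  have zA1 : A 1 = 0 := by omega
  have zA2 : A 2 = 0 := by omega
  have zA3 : A 3 = 0 := by omega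
  have zA5 : A 5 = 0 := by omega
  have zA7 : A 7 = 0 := by omega
  have zB0 : B 0 = 0 := by omega
  have zB1 : B 1 = 0 := by omega
  have zB2 : B 2 = 0 := by omega
  have zB3 : B 3 = 0 := by omega
  have zB4 : B 4 = 0 := by omega
  have zB6 : B 6 = 0 := by omega
  have zB5 : B 5 = 3 * A 4 := by omega
  have zB7 : B 7 = A 6 := by omega
  have zC0 : C 0 = 0 := by omega
  have zC1 : C 1 = 0 := by omega
  have zC2 : C 2 = 0 := by omega
  have zC3 : C 3 = 0 := by omega
  have zC5 : C 5 = 0 := by omega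
  have zC7 : C 7 = 0 := by omega
  have zD0 : D 0 = 0 := by omega
  have zD1 : D 1 = 0 := by omega
  have zD2 : D 2 = 0 := by omega
  have zD3 : D 3 = 0 := by omega
  have zD4 : D 4 = 0 := by omega
  have zD6 : D 6 = 0 := by omega
  have zD5 : D 5 = C 4 := by omega
  have zC6 : C 6 = 3 * D 7 := by omega
  have cA0 : ((A 0 : ℤ) : ℂ) = 0 := by simp [zA0]
  have cA1 : ((A 1 : ℤ) : ℂ) = 0 := by simp [zA1]
  have cA2 : ((A 2 : ℤ) : ℂ) = 0 := by simp [zA2]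
  have cA3 : ((A 3 : ℤ) : ℂ) = 0 := by simp [zA3]
  have cA5 : ((A 5 : ℤ) : ℂ) = 0 := by simp [zA5]
  have cA7 : ((A 7 : ℤ) : ℂ) = 0 := by simp [zA7]
  have cB0 : ((B 0 : ℤ) : ℂ) = 0 := by simp [zB0]
  have cB1 : ((B 1 : ℤ) : ℂ) = 0 := by simp [zB1]
  have cB2 : ((B 2 : ℤ) : ℂ) = 0 := by simp [zB2]
  have cB3 : ((B 3 : ℤ) : ℂ) = 0 := by simp [zB3]
  have cB4 : ((B 4 : ℤ) : ℂ) = 0 := by simp [zB4]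
  have cB6 : ((B 6 : ℤ) : ℂ) = 0 := by simp [zB6]
  have cB5 : ((B 5 : ℤ) : ℂ) = 3 * ((A 4 : ℤ) : ℂ) := by rw [zB5]; push_cast; ring
  have cB7 : ((B 7 : ℤ) : ℂ) = ((A 6 : ℤ) : ℂ) := by rw [zB7]
  have cC0 : ((C 0 : ℤ) : ℂ) = 0 := by simp [zC0]
  have cC1 : ((C 1 : ℤ) : ℂ) = 0 := by simp [zC1]
  have cC2 : ((C 2 : ℤ) : ℂ) = 0 := by simp [zC2]
  have cC3 : ((C 3 : ℤ) : ℂ) = 0 := by simp [zC3]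
  have cC5 : ((C 5 : ℤ) : ℂ) = 0 := by simp [zC5]
  have cC7 : ((C 7 : ℤ) : ℂ) = 0 := by simp [zC7]
  have cD0 : ((D 0 : ℤ) : ℂ) = 0 := by simp [zD0]
  have cD1 : ((D 1 : ℤ) : ℂ) = 0 := by simp [zD1]
  have cD2 : ((D 2 : ℤ) : ℂ) = 0 := by simp [zD2]
  have cD3 : ((D 3 : ℤ) : ℂ) = 0 := by simp [zD3]
  have cD4 : ((D 4 : ℤ) : ℂ) = 0 := by simp [zD4]
  have cD6 : ((D 6 : ℤ) : ℂ) = 0 := by simp [zD6]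
  have cD5 : ((D 5 : ℤ) : ℂ) = ((C 4 : ℤ) : ℂ) := by rw [zD5]
  have cC6 : ((C 6 : ℤ) : ℂ) = 3 * ((D 7 : ℤ) : ℂ) := by rw [zC6]; push_cast; ring
  have h02 : H 0 2 = ((C 4 : ℤ) : ℂ) := by
    linear_combination hC0 / 3 + a * cC0 + (b/3) * cC1
  have h20 : H 2 0 = ((A 6 : ℤ) : ℂ) := by
    linear_combination hA2 + a * cA2 + b * cA3
  have hsym : H 0 2 = star (H 2 0) := by
    conv_lhs => rw [← hH]
    rfl
  have cC4 : ((C 4 : ℤ) : ℂ) = ((A 6 : ℤ) : ℂ) := by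
    rw [← h02, hsym, h20]
    simp
  refine ⟨A 4, A 6, D 7, ?_⟩
  ext i j
  fin_cases i <;> fin_cases j
  · show H 0 0 = ((3 * A 4 : ℤ) : ℂ)
    push_cast
    linear_combination hA0 + 3*a*cA0 + b*cA1
  · show H 0 1 = 0
    linear_combination hB0 / 3 + a*cB0 + (b/3)*cB1 + cB4
  · show H 0 2 = ((A 6 : ℤ) : ℂ)
    rw [h02, cC4]
  · show H 0 3 = 0
    linear_combination hD0 + 3*a*cD0 + b*cD1 + 3*cD4
  · show H 1 0 = 0
    linear_combination hA1 + b*cA0 + (c/3)*cA1 + cA5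
  · show H 1 1 = ((A 4 : ℤ) : ℂ)
    linear_combination hB1 / 3 + (b/3)*cB0 + (c/9)*cB1 + cB5/3
  · show H 1 2 = 0
    linear_combination hC1 / 3 + (b/3)*cC0 + (c/9)*cC1 + cC5/3
  · show H 1 3 = ((A 6 : ℤ) : ℂ)
    linear_combination hD1 + b*cD0 + (c/3)*cD1 + cD5 + cC4
  · show H 2 0 = ((A 6 : ℤ) : ℂ)
    exact h20
  · show H 2 1 = 0
    linear_combination hB2 / 3 + (a/3)*cB2 + (b/3)*cB3 + cB6/3
  · show H 2 2 = ((D 7 : ℤ) : ℂ)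
    linear_combination hC2 / 3 + (a/3)*cC2 + (b/3)*cC3 + cC6/3
  · show H 2 3 = 0
    linear_combination hD2 + a*cD2 + b*cD3 + cD6
  · show H 3 0 = 0
    linear_combination hA3 + b*cA2 + c*cA3 + 3*cA7
  · show H 3 1 = ((A 6 : ℤ) : ℂ)
    linear_combination hB3 / 3 + (b/3)*cB2 + (c/3)*cB3 + cB7
  · show H 3 2 = 0
    linear_combination hC3 / 3 + (b/3)*cC2 + (c/3)*cC3 + cC7
  · show H 3 3 = ((3 * D 7 : ℤ) : ℂ)
    push_cast
    linear_combination hD3 + b*cD2 + c*cD3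
end
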